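/- In a cone metric space, if S is a T-Kannan contraction (there exists b ∈ [0,1/2) with d(TSx,TSy) ≤ b[d(Tx,TSx)+d(Ty,TSy)] for all x,y), then S is a T-weak contraction: there exist δ ∈ (0,1) and L ≥ 0 with d(TSx,TSy) ≤ δ·d(Tx,Ty) + L·d(Ty,TSx) for all x,y ∈ M. -/

import Mathlib

open Filter Topology

variable {E : Type*}

/-- A cone in a real Banach space. -/
def IsCone [NormedAddCommGroup E] [NormedSpace ℝ E] (P : Set E) : Prop :=
  IsClosed P ∧ P.Nonempty ∧ P ≠ {0} ∧
  (∀ (a b : ℝ), 0 ≤ a → 0 ≤ b → ∀ x ∈ P, ∀ y ∈ P, a • x + b • y ∈ P) ∧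
  (∀ x, x ∈ P → -x ∈ P → x = 0)

/-- The partial order induced by the cone `P`: `x ≤ y` iff `y - x ∈ P`. -/
def coneLe [NormedAddCommGroup E] (P : Set E) (x y : E) : Prop := y - x ∈ P

/-- `x ≪ y` iff `y - x ∈ int P`. -/
def coneLt [NormedAddCommGroup E] (P : Set E) (x y : E) : Prop := y - x ∈ interior P

/-- A normal cone with normal constant `K`. -/
def IsNormalCone [NormedAddCommGroup E] (P : Set E) (K : ℝ) : Prop :=
  0 < K ∧ ∀ x y : E, coneLe P 0 x → coneLe P x y → ‖x‖ ≤ K * ‖y‖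

/-- A cone metric on `M` with values in `E`, relative to the cone `P`. -/
def IsConeMetric [NormedAddCommGroup E] {M : Type*} (P : Set E) (d : M → M → E) : Prop :=
  (∀ x y : M, coneLe P 0 (d x y)) ∧
  (∀ x y : M, d x y = 0 ↔ x = y) ∧
  (∀ x y : M, d x y = d y x) ∧
  (∀ x y z : M, coneLe P (d x y) (d x z + d z y))

/-- Convergence of a sequence in a cone metric space. -/
def ConeConverges [NormedAddCommGroup E] {M : Type*} (P : Set E) (d : M → M → E)
    (s : ℕ → M) (x : M) : Prop :=
  ∀ c : E, coneLt P 0 c → ∃ n₀ : ℕ, ∀ n > n₀, coneLt P (d (s n) x) c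

/-- Cauchy sequence in a cone metric space. -/
def ConeCauchy [NormedAddCommGroup E] {M : Type*} (P : Set E) (d : M → M → E)
    (s : ℕ → M) : Prop :=
  ∀ c : E, coneLt P 0 c → ∃ n₀ : ℕ, ∀ n ≥ n₀, ∀ m ≥ n₀, coneLt P (d (s n) (s m)) c

/-- Completeness of a cone metric space. -/
def ConeComplete [NormedAddCommGroup E] {M : Type*} (P : Set E) (d : M → M → E) : Prop :=
  ∀ s : ℕ → M, ConeCauchy P d s → ∃ x : M, ConeConverges P d s x

/-- Continuity of a self-map of a cone metric space. -/
def ConeContinuous [NormedAddCommGroup E] {M : Type*} (P : Set E) (d : M → M → E)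
    (T : M → M) : Prop :=
  ∀ (s : ℕ → M) (x : M), ConeConverges P d s x → ConeConverges P d (fun n => T (s n)) (T x)

/-- `T` is subsequentially convergent. -/
def SubseqConvergent [NormedAddCommGroup E] {M : Type*} (P : Set E) (d : M → M → E)
    (T : M → M) : Prop :=
  ∀ s : ℕ → M, (∃ y, ConeConverges P d (fun n => T (s n)) y) →
    ∃ φ : ℕ → ℕ, StrictMono φ ∧ ∃ z, ConeConverges P d (fun n => s (φ n)) z

/-- `T` is sequentially convergent. -/
def SeqConvergent [NormedAddCommGroup E] {M : Type*} (P : Set E) (d : M → M → E)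
    (T : M → M) : Prop :=
  ∀ s : ℕ → M, (∃ y, ConeConverges P d (fun n => T (s n)) y) →
    ∃ z, ConeConverges P d s z

/-- `S` is a `T`-Zamfirescu mapping. -/
def TZamfirescu [NormedAddCommGroup E] [NormedSpace ℝ E] {M : Type*} (P : Set E)
    (d : M → M → E) (T S : M → M) : Prop :=
  ∃ a b c : ℝ, 0 ≤ a ∧ a < 1 ∧ 0 ≤ b ∧ b < 1/2 ∧ 0 ≤ c ∧ c < 1/2 ∧
    ∀ x y : M,
      coneLe P (d (T (S x)) (T (S y))) (a • d (T x) (T y)) ∨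
      coneLe P (d (T (S x)) (T (S y))) (b • (d (T x) (T (S x)) + d (T y) (T (S y)))) ∨
      coneLe P (d (T (S x)) (T (S y))) (c • (d (T x) (T (S y)) + d (T y) (T (S x))))

/-- `S` is a `T`-weak contraction. -/
def TWeakContraction [NormedAddCommGroup E] [NormedSpace ℝ E] {M : Type*} (P : Set E)
    (d : M → M → E) (T S : M → M) : Prop :=
  ∃ δ L : ℝ, 0 < δ ∧ δ < 1 ∧ 0 ≤ L ∧
    ∀ x y : M, coneLe P (d (T (S x)) (T (S y))) (δ • d (T x) (T y) + L • d (T y) (T (S x)))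

def IsTKannanWith [NormedAddCommGroup E] [NormedSpace ℝ E] {M : Type*} (P : Set E)
    (d : M → M → E) (T S : M → M) (b : ℝ) : Prop :=
  ∀ x y : M, coneLe P (d (T (S x)) (T (S y))) (b • (d (T x) (T (S x)) + d (T y) (T (S y))))

namespace IsCone

variable [NormedAddCommGroup E] [NormedSpace ℝ E] {P : Set E}

theorem add_mem (hP : IsCone P) {x y : E} (hx : x ∈ P) (hy : y ∈ P) : x + y ∈ P := by
  simpa using hP.2.2.2.1 1 1 zero_le_one zero_le_one x hx y hy

theorem smul_mem (hP : IsCone P) {a : ℝ} (ha : 0 ≤ a) {x : E} (hx : x ∈ P) : a • x ∈ P := by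
  simpa using hP.2.2.2.1 a 0 ha le_rfl x hx x hx

theorem coneLe_trans (hP : IsCone P) {x y z : E} (hxy : coneLe P x y) (hyz : coneLe P y z) :
    coneLe P x z := by
  simpa [coneLe] using hP.add_mem hyz hxy

theorem coneLe_add (hP : IsCone P) {x y x' y' : E} (h : coneLe P x y) (h' : coneLe P x' y') :
    coneLe P (x + x') (y + y') := by
  simpa [coneLe, add_sub_add_comm] using hP.add_mem h h'

theorem coneLe_smul (hP : IsCone P) {a : ℝ} (ha : 0 ≤ a) {x y : E} (h : coneLe P x y) :
    coneLe P (a • x) (a • y) := by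
  simpa [coneLe, smul_sub] using hP.smul_mem ha h

theorem smul_coneLe_smul_of_le (hP : IsCone P) {a b : ℝ} (hab : a ≤ b) {x : E}
    (hx : coneLe P 0 x) : coneLe P (a • x) (b • x) := by
  simpa [coneLe, sub_smul] using hP.smul_mem (sub_nonneg.2 hab) hx

theorem coneLe_inv_smul_of_coneLe_add_smul (hP : IsCone P) {b : ℝ} (hb : b < 1) {z w : E}
    (h : coneLe P z (w + b • z)) : coneLe P z ((1 - b)⁻¹ • w) := by
  have h1b : (1 - b) ≠ 0 := by linarith
  have key : (1 - b)⁻¹ • w - z = (1 - b)⁻¹ • (w + b • z - z) := by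
    match_scalars <;> field_simp; ring
  simpa only [coneLe, key] using hP.smul_mem (inv_nonneg.2 (by linarith)) h

end IsCone

section Kannan

variable [NormedAddCommGroup E] [NormedSpace ℝ E] {M : Type*} {P : Set E} {d : M → M → E}
  {T S : M → M}

theorem IsTKannanWith.mono (hP : IsCone P) (hd : IsConeMetric P d) {b b' : ℝ} (hbb' : b ≤ b')
    (hK : IsTKannanWith P d T S b) : IsTKannanWith P d T S b' := fun x y =>
  hP.coneLe_trans (hK x y) <| hP.smul_coneLe_smul_of_le hbb' <| by
    simpa using hP.coneLe_add (hd.1 (T x) (T (S x))) (hd.1 (T y) (T (S y)))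

/-- Bound both Kannan terms by the triangle inequality through `T y` and `T (S x)`:
`d(TSx,TSy) ≤ b d(Tx,Ty) + 2b d(Ty,TSx) + b d(TSx,TSy)`, then absorb the last term. -/
theorem TWeakContraction.of_isTKannanWith (hP : IsCone P) (hd : IsConeMetric P d) {b : ℝ}
    (hb0 : 0 < b) (hb : b < 1 / 2) (hK : IsTKannanWith P d T S b) :
    TWeakContraction P d T S := by
  have h1b : 0 < 1 - b := by linarith
  refine ⟨b / (1 - b), 2 * b / (1 - b), by positivity, (div_lt_one h1b).2 (by linarith),
    by positivity, fun x y => ?_⟩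
  set z := d (T (S x)) (T (S y))
  set u := d (T x) (T y)
  set v := d (T y) (T (S x))
  have hsum : coneLe P (d (T x) (T (S x)) + d (T y) (T (S y))) ((u + v) + (v + z)) :=
    hP.coneLe_add (hd.2.2.2 _ _ (T y)) (hd.2.2.2 _ _ (T (S x)))
  have hz : coneLe P z ((b • u + (2 * b) • v) + b • z) := by
    convert hP.coneLe_trans (hK x y) (hP.coneLe_smul hb0.le hsum) using 1
    module
  convert hP.coneLe_inv_smul_of_coneLe_add_smul (by linarith) hz using 1
  match_scalars <;> field_simp

end Kannan

theorem tk_implies_tweak_general {E M : Type*} [NormedAddCommGroup E]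
    [NormedSpace ℝ E] (P : Set E) (hP : IsCone P)
    (d : M → M → E) (hd : IsConeMetric P d) (T S : M → M)
    (hTK : ∃ b : ℝ, 0 ≤ b ∧ b < 1/2 ∧
      ∀ x y : M, coneLe P (d (T (S x)) (T (S y)))
        (b • (d (T x) (T (S x)) + d (T y) (T (S y))))) :
    TWeakContraction P d T S := by
  obtain ⟨b, -, hb, hK⟩ := hTK
  -- A Kannan constant `b = 0` must be raised to obtain `δ > 0`.
  have hK' : IsTKannanWith P d T S (max b (1 / 4)) :=
    IsTKannanWith.mono hP hd (le_max_left _ _) hK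
  exact TWeakContraction.of_isTKannanWith hP hd (by positivity) (max_lt hb (by norm_num)) hK'

theorem tk_implies_tweak {E M : Type*} [NormedAddCommGroup E]
    [NormedSpace ℝ E] [CompleteSpace E] (P : Set E) (hP : IsCone P)
    (d : M → M → E) (hd : IsConeMetric P d) (T S : M → M)
    (hTK : ∃ b : ℝ, 0 ≤ b ∧ b < 1/2 ∧
      ∀ x y : M, coneLe P (d (T (S x)) (T (S y)))
        (b • (d (T x) (T (S x)) + d (T y) (T (S y))))) :
    TWeakContraction P d T S :=
  tk_implies_tweak_general P hP d hd T S hTK
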